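/- The tensor ∑_{g∈K} g·(e₁₁⊗e₁₁⊗e₁₁) + ∑_{g∈K} g·ι(W) − R is a 3×3 matrix multiplication tensor: its full contraction against A⊗B⊗C equals ∑_{1≤i,j,k≤3} aᵢⱼbⱼₖcₖᵢ for all 3×3 matrices A, B, C; here W is the Winograd variant of Strassen's 2×2 algorithm (with λ=1), ι embeds 2×2 matrices into the block complementary to row/column 1 as specified by the lift L₁,₁,₁, K is the Klein four-group of sandwichings, and R is the correction term from the decomposition of M. -/

import Mathlib

open Matrix

variable {K : Type*} [Field K]

abbrev M3 (K : Type*) [Field K] := Matrix (Fin 3) (Fin 3) K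

/-- Sandwiching by `g = (G₁,G₂,G₃)` on a triple of matrices (rank-one tensor):
`(T₁,T₂,T₃) ↦ (G₁⁻ᵀT₁G₂ᵀ, G₂⁻ᵀT₂G₃ᵀ, G₃⁻ᵀT₃G₁ᵀ)`. -/
noncomputable def sw (g : M3 K × M3 K × M3 K) (t : M3 K × M3 K × M3 K) : M3 K × M3 K × M3 K :=
  ((g.1⁻¹)ᵀ * t.1 * g.2.1ᵀ, (g.2.1⁻¹)ᵀ * t.2.1 * g.2.2ᵀ, (g.2.2⁻¹)ᵀ * t.2.2 * g.1ᵀ)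

/-- Full contraction of the rank-one tensor `T₁⊗T₂⊗T₃` against `A⊗B⊗C`. -/
def ctr (t : M3 K × M3 K × M3 K) (A B C : M3 K) : K :=
  (t.1ᵀ * A).trace * (t.2.1ᵀ * B).trace * (t.2.2ᵀ * C).trace

/-- The 3×3 permutation matrix of the transposition (1 2). -/
def P12 (K : Type*) [Field K] : M3 K := !![0,1,0; 1,0,0; 0,0,1]

/-- The Klein four-group `𝒦 = {(I,I,I),(I,P,P),(P,P,I),(P,I,P)}`. -/
def kleinK (K : Type*) [Field K] : List (M3 K × M3 K × M3 K) :=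
  [(1, 1, 1), (1, P12 K, P12 K), (P12 K, P12 K, 1), (P12 K, 1, P12 K)]

/-- Embedding of a 2×2 matrix into rows/columns {2,3} of a 3×3 matrix
(zeros in row 1 and column 1): the lift `L₁,₁,₁`. -/
def iota (M : Matrix (Fin 2) (Fin 2) K) : M3 K :=
  Matrix.of fun i j =>
    Fin.cases (0 : K) (fun i' => Fin.cases (0 : K) (fun j' => M i' j') j) i

/-- The seven rank-one summands of the Winograd variant `W` (λ = 1). -/
def wList (K : Type*) [Field K] :
    List (Matrix (Fin 2) (Fin 2) K × Matrix (Fin 2) (Fin 2) K × Matrix (Fin 2) (Fin 2) K) :=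
  [(!![-1,1;-1,0], !![1,-1;1,0], !![1,-1;1,0]),
   (!![-1,1;-1,1], !![0,0;1,0], !![0,1;0,0]),
   (!![1,0;1,0], !![1,0;1,0], !![1,0;1,0]),
   (!![0,0;0,1], !![0,0;0,1], !![0,0;0,1]),
   (!![0,0;1,0], !![0,1;0,0], !![-1,1;-1,1]),
   (!![1,-1;0,0], !![1,-1;0,0], !![1,-1;0,0]),
   (!![0,1;0,0], !![-1,1;-1,1], !![0,0;1,0])]

/-- matrix unit `eᵢⱼ` (0-based). -/
def eM (i j : Fin 3) : M3 K := Matrix.single i j (1 : K)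

lemma P12_mul_self : P12 K * P12 K = 1 := by
  rw [P12]
  norm_num [Matrix.mul_fin_three]
  exact Matrix.one_fin_three.symm

lemma P12_inv : (P12 K)⁻¹ = P12 K := Matrix.inv_eq_right_inv P12_mul_self

lemma P12_transpose : (P12 K)ᵀ = P12 K := by
  ext i j; fin_cases i <;> fin_cases j <;> rfl

lemma iota_eq (M : Matrix (Fin 2) (Fin 2) K) :
    iota M = !![0,0,0; 0, M 0 0, M 0 1; 0, M 1 0, M 1 1] := by
  ext i j; fin_cases i <;> fin_cases j <;> rfl

lemma eM00 : eM (K := K) 0 0 = !![1,0,0; 0,0,0; 0,0,0] := by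
  ext i j; fin_cases i <;> fin_cases j <;> simp [eM, Matrix.single, Matrix.vecHead, Matrix.vecTail]
lemma eM12 : eM (K := K) 1 2 = !![0,0,0; 0,0,1; 0,0,0] := by
  ext i j; fin_cases i <;> fin_cases j <;> simp [eM, Matrix.single, Matrix.vecHead, Matrix.vecTail]
lemma eM21 : eM (K := K) 2 1 = !![0,0,0; 0,0,0; 0,1,0] := by
  ext i j; fin_cases i <;> fin_cases j <;> simp [eM, Matrix.single, Matrix.vecHead, Matrix.vecTail]
lemma eM22 : eM (K := K) 2 2 = !![0,0,0; 0,0,0; 0,0,1] := by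
  ext i j; fin_cases i <;> fin_cases j <;> simp [eM, Matrix.single, Matrix.vecHead, Matrix.vecTail]

lemma myTraceTMul (T A : M3 K) :
    (Tᵀ * A).trace = ∑ i : Fin 3, ∑ j : Fin 3, T i j * A i j := by
  rw [Finset.sum_comm]
  simp [Matrix.trace, Matrix.diag, Matrix.mul_apply, Matrix.transpose_apply]

set_option maxHeartbeats 1000000 in
lemma Wsum0 (A B C : M3 K) :
    ((wList K).map fun w => ctr (sw ((1 : M3 K), (1 : M3 K), (1 : M3 K)) (iota w.1, iota w.2.1, iota w.2.2)) A B C).sum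
    = A 1 1 * B 1 1 * C 1 1 + A 1 1 * B 1 2 * C 2 1 + A 1 2 * B 2 1 * C 1 1 + A 1 2 * B 2 2 * C 2 1 + A 2 1 * B 1 1 * C 1 2 + A 2 1 * B 1 2 * C 2 2 + A 2 2 * B 2 1 * C 1 2 + A 2 2 * B 2 2 * C 2 2 := by
  simp only [ctr, sw, P12_inv, inv_one, Matrix.transpose_one, one_mul, mul_one,
    P12_transpose, iota_eq, eM00, eM12, eM21, eM22, myTraceTMul, wList, List.map,
    List.sum_cons, List.sum_nil, kleinK]
  simp only [P12, Matrix.mul_fin_three, Fin.sum_univ_three, Matrix.cons_val_zero,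
    Matrix.cons_val_one, Matrix.head_cons, Matrix.cons_val_two, Matrix.tail_cons,
    Matrix.of_apply, Matrix.cons_val', Matrix.empty_val', Matrix.cons_val_fin_one,
    Matrix.head_fin_const, mul_zero, zero_mul, add_zero, zero_add, one_mul, mul_one,
    neg_mul, mul_neg, neg_neg, neg_zero]
  ring

set_option maxHeartbeats 1000000 in
lemma Wsum1 (A B C : M3 K) :
    ((wList K).map fun w => ctr (sw ((1 : M3 K), P12 K, P12 K) (iota w.1, iota w.2.1, iota w.2.2)) A B C).sum
    = A 1 0 * B 0 0 * C 0 1 + A 1 0 * B 0 2 * C 2 1 + A 1 2 * B 2 0 * C 0 1 + A 1 2 * B 2 2 * C 2 1 + A 2 0 * B 0 0 * C 0 2 + A 2 0 * B 0 2 * C 2 2 + A 2 2 * B 2 0 * C 0 2 + A 2 2 * B 2 2 * C 2 2 := by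
  simp only [ctr, sw, P12_inv, inv_one, Matrix.transpose_one, one_mul, mul_one,
    P12_transpose, iota_eq, eM00, eM12, eM21, eM22, myTraceTMul, wList, List.map,
    List.sum_cons, List.sum_nil, kleinK]
  simp only [P12, Matrix.mul_fin_three, Fin.sum_univ_three, Matrix.cons_val_zero,
    Matrix.cons_val_one, Matrix.head_cons, Matrix.cons_val_two, Matrix.tail_cons,
    Matrix.of_apply, Matrix.cons_val', Matrix.empty_val', Matrix.cons_val_fin_one,
    Matrix.head_fin_const, mul_zero, zero_mul, add_zero, zero_add, one_mul, mul_one,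
    neg_mul, mul_neg, neg_neg, neg_zero]
  ring

set_option maxHeartbeats 1000000 in
lemma Wsum2 (A B C : M3 K) :
    ((wList K).map fun w => ctr (sw (P12 K, P12 K, (1 : M3 K)) (iota w.1, iota w.2.1, iota w.2.2)) A B C).sum
    = A 0 0 * B 0 1 * C 1 0 + A 0 0 * B 0 2 * C 2 0 + A 0 2 * B 2 1 * C 1 0 + A 0 2 * B 2 2 * C 2 0 + A 2 0 * B 0 1 * C 1 2 + A 2 0 * B 0 2 * C 2 2 + A 2 2 * B 2 1 * C 1 2 + A 2 2 * B 2 2 * C 2 2 := by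
  simp only [ctr, sw, P12_inv, inv_one, Matrix.transpose_one, one_mul, mul_one,
    P12_transpose, iota_eq, eM00, eM12, eM21, eM22, myTraceTMul, wList, List.map,
    List.sum_cons, List.sum_nil, kleinK]
  simp only [P12, Matrix.mul_fin_three, Fin.sum_univ_three, Matrix.cons_val_zero,
    Matrix.cons_val_one, Matrix.head_cons, Matrix.cons_val_two, Matrix.tail_cons,
    Matrix.of_apply, Matrix.cons_val', Matrix.empty_val', Matrix.cons_val_fin_one,
    Matrix.head_fin_const, mul_zero, zero_mul, add_zero, zero_add, one_mul, mul_one,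
    neg_mul, mul_neg, neg_neg, neg_zero]
  ring

set_option maxHeartbeats 1000000 in
lemma Wsum3 (A B C : M3 K) :
    ((wList K).map fun w => ctr (sw (P12 K, (1 : M3 K), P12 K) (iota w.1, iota w.2.1, iota w.2.2)) A B C).sum
    = A 0 1 * B 1 0 * C 0 0 + A 0 1 * B 1 2 * C 2 0 + A 0 2 * B 2 0 * C 0 0 + A 0 2 * B 2 2 * C 2 0 + A 2 1 * B 1 0 * C 0 2 + A 2 1 * B 1 2 * C 2 2 + A 2 2 * B 2 0 * C 0 2 + A 2 2 * B 2 2 * C 2 2 := by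
  simp only [ctr, sw, P12_inv, inv_one, Matrix.transpose_one, one_mul, mul_one,
    P12_transpose, iota_eq, eM00, eM12, eM21, eM22, myTraceTMul, wList, List.map,
    List.sum_cons, List.sum_nil, kleinK]
  simp only [P12, Matrix.mul_fin_three, Fin.sum_univ_three, Matrix.cons_val_zero,
    Matrix.cons_val_one, Matrix.head_cons, Matrix.cons_val_two, Matrix.tail_cons,
    Matrix.of_apply, Matrix.cons_val', Matrix.empty_val', Matrix.cons_val_fin_one,
    Matrix.head_fin_const, mul_zero, zero_mul, add_zero, zero_add, one_mul, mul_one,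
    neg_mul, mul_neg, neg_neg, neg_zero]
  ring

set_option maxHeartbeats 1000000 in
lemma orbitE00 (A B C : M3 K) :
    ((kleinK K).map fun g => ctr (sw g (eM 0 0, eM 0 0, eM 0 0)) A B C).sum = A 0 0 * B 0 0 * C 0 0 + A 0 1 * B 1 1 * C 1 0 + A 1 0 * B 0 1 * C 1 1 + A 1 1 * B 1 0 * C 0 1 := by
  simp only [ctr, sw, P12_inv, inv_one, Matrix.transpose_one, one_mul, mul_one,
    P12_transpose, iota_eq, eM00, eM12, eM21, eM22, myTraceTMul, wList, List.map,
    List.sum_cons, List.sum_nil, kleinK]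
  simp only [P12, Matrix.mul_fin_three, Fin.sum_univ_three, Matrix.cons_val_zero,
    Matrix.cons_val_one, Matrix.head_cons, Matrix.cons_val_two, Matrix.tail_cons,
    Matrix.of_apply, Matrix.cons_val', Matrix.empty_val', Matrix.cons_val_fin_one,
    Matrix.head_fin_const, mul_zero, zero_mul, add_zero, zero_add, one_mul, mul_one,
    neg_mul, mul_neg, neg_neg, neg_zero]
  ring

set_option maxHeartbeats 1000000 in
lemma orbitR1 (A B C : M3 K) :
    ((kleinK K).map fun g => ctr (sw g (eM 1 2, eM 2 2, eM 2 1)) A B C).sum = (2 : K) * A 0 2 * B 2 2 * C 2 0 + (2 : K) * A 1 2 * B 2 2 * C 2 1 := by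
  simp only [ctr, sw, P12_inv, inv_one, Matrix.transpose_one, one_mul, mul_one,
    P12_transpose, iota_eq, eM00, eM12, eM21, eM22, myTraceTMul, wList, List.map,
    List.sum_cons, List.sum_nil, kleinK]
  simp only [P12, Matrix.mul_fin_three, Fin.sum_univ_three, Matrix.cons_val_zero,
    Matrix.cons_val_one, Matrix.head_cons, Matrix.cons_val_two, Matrix.tail_cons,
    Matrix.of_apply, Matrix.cons_val', Matrix.empty_val', Matrix.cons_val_fin_one,
    Matrix.head_fin_const, mul_zero, zero_mul, add_zero, zero_add, one_mul, mul_one,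
    neg_mul, mul_neg, neg_neg, neg_zero]
  ring

set_option maxHeartbeats 1000000 in
lemma orbitR2 (A B C : M3 K) :
    ((kleinK K).map fun g => ctr (sw g (eM 2 2, eM 2 1, eM 1 2)) A B C).sum = (2 : K) * A 2 2 * B 2 0 * C 0 2 + (2 : K) * A 2 2 * B 2 1 * C 1 2 := by
  simp only [ctr, sw, P12_inv, inv_one, Matrix.transpose_one, one_mul, mul_one,
    P12_transpose, iota_eq, eM00, eM12, eM21, eM22, myTraceTMul, wList, List.map,
    List.sum_cons, List.sum_nil, kleinK]
  simp only [P12, Matrix.mul_fin_three, Fin.sum_univ_three, Matrix.cons_val_zero,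
    Matrix.cons_val_one, Matrix.head_cons, Matrix.cons_val_two, Matrix.tail_cons,
    Matrix.of_apply, Matrix.cons_val', Matrix.empty_val', Matrix.cons_val_fin_one,
    Matrix.head_fin_const, mul_zero, zero_mul, add_zero, zero_add, one_mul, mul_one,
    neg_mul, mul_neg, neg_neg, neg_zero]
  ring

set_option maxHeartbeats 1000000 in
lemma orbitR3 (A B C : M3 K) :
    ((kleinK K).map fun g => ctr (sw g (eM 2 1, eM 1 2, eM 2 2)) A B C).sum = (2 : K) * A 2 0 * B 0 2 * C 2 2 + (2 : K) * A 2 1 * B 1 2 * C 2 2 := by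
  simp only [ctr, sw, P12_inv, inv_one, Matrix.transpose_one, one_mul, mul_one,
    P12_transpose, iota_eq, eM00, eM12, eM21, eM22, myTraceTMul, wList, List.map,
    List.sum_cons, List.sum_nil, kleinK]
  simp only [P12, Matrix.mul_fin_three, Fin.sum_univ_three, Matrix.cons_val_zero,
    Matrix.cons_val_one, Matrix.head_cons, Matrix.cons_val_two, Matrix.tail_cons,
    Matrix.of_apply, Matrix.cons_val', Matrix.empty_val', Matrix.cons_val_fin_one,
    Matrix.head_fin_const, mul_zero, zero_mul, add_zero, zero_add, one_mul, mul_one,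
    neg_mul, mul_neg, neg_neg, neg_zero]
  ring

set_option maxHeartbeats 1000000 in
lemma orbitR4 (A B C : M3 K) :
    ((kleinK K).map fun g => ctr (sw g (eM 2 2, eM 2 2, eM 2 2)) A B C).sum = (4 : K) * A 2 2 * B 2 2 * C 2 2 := by
  simp only [ctr, sw, P12_inv, inv_one, Matrix.transpose_one, one_mul, mul_one,
    P12_transpose, iota_eq, eM00, eM12, eM21, eM22, myTraceTMul, wList, List.map,
    List.sum_cons, List.sum_nil, kleinK]
  simp only [P12, Matrix.mul_fin_three, Fin.sum_univ_three, Matrix.cons_val_zero,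
    Matrix.cons_val_one, Matrix.head_cons, Matrix.cons_val_two, Matrix.tail_cons,
    Matrix.of_apply, Matrix.cons_val', Matrix.empty_val', Matrix.cons_val_fin_one,
    Matrix.head_fin_const, mul_zero, zero_mul, add_zero, zero_add, one_mul, mul_one,
    neg_mul, mul_neg, neg_neg, neg_zero]
  ring

lemma kleinK_map_sum (f : M3 K × M3 K × M3 K → K) :
    ((kleinK K).map f).sum
      = f ((1 : M3 K), (1 : M3 K), (1 : M3 K)) + f ((1 : M3 K), P12 K, P12 K)
        + f (P12 K, P12 K, (1 : M3 K)) + f (P12 K, (1 : M3 K), P12 K) := by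
  simp [kleinK]; ring

set_option maxHeartbeats 1000000 in
/-- The tensor `∑_{g∈K} g·(e₁₁⊗e₁₁⊗e₁₁) + ∑_{g∈K} g·ι(W) − R` is a 3×3 matrix
multiplication tensor. -/
theorem laderman_variant_is_mm_tensor [CharZero K] (A B C : M3 K) :
    ((kleinK K).map fun g => ctr (sw g (eM 0 0, eM 0 0, eM 0 0)) A B C).sum
    + ((kleinK K).map fun g =>
        ((wList K).map fun w => ctr (sw g (iota w.1, iota w.2.1, iota w.2.2)) A B C).sum).sum
    - ((1/2 : K) * ((kleinK K).map fun g => ctr (sw g (eM 1 2, eM 2 2, eM 2 1)) A B C).sum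
       + (1/2 : K) * ((kleinK K).map fun g => ctr (sw g (eM 2 2, eM 2 1, eM 1 2)) A B C).sum
       + (1/2 : K) * ((kleinK K).map fun g => ctr (sw g (eM 2 1, eM 1 2, eM 2 2)) A B C).sum
       + (3 : K) * ((1/4 : K) *
           ((kleinK K).map fun g => ctr (sw g (eM 2 2, eM 2 2, eM 2 2)) A B C).sum))
    = ∑ i : Fin 3, ∑ j : Fin 3, ∑ k : Fin 3, A i j * B j k * C k i := by
  rw [orbitE00, orbitR1, orbitR2, orbitR3, orbitR4,
    kleinK_map_sum (fun g => ((wList K).map fun w =>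
      ctr (sw g (iota w.1, iota w.2.1, iota w.2.2)) A B C).sum),
    Wsum0, Wsum1, Wsum2, Wsum3]
  simp only [Fin.sum_univ_three]
  ring
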